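/- arXiv:math/0607766 — 3 statements merged into one kernel-verified Lean document; each statement's English description precedes it below -/
import Mathlib

section
/- Every torsion-free group that contains a cyclic subgroup of finite index is itself cyclic. Precisely: if G is a group in which every non-identity element has infinite order, and H is a subgroup of G of finite index such that H is cyclic, then G is cyclic. -/
/-!
The normal core of `H` is a cyclic normal subgroup `⟨n⟩` of finite index `k`. For `g : G` write
`g n g⁻¹ = n ^ e` and `g ^ k = n ^ j`; conjugating `g ^ k` by `g` gives `n ^ j = n ^ (e * j)`, so
either `e = 1` or `g ^ k = 1`, and torsion-freeness makes `n` central. The center then has finite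
index, so by Schur's theorem the commutator subgroup is finite, hence trivial. Finally, in the
abelian torsion-free group `G` the map `g ↦ g ^ [G : H]` embeds `G` into the cyclic group `H`.
-/

open Subgroup
open scoped commutatorElement

section

variable {G : Type*} [Group G]

theorem commutatorElement_mul_mem_center {a b z w : G} (hz : z ∈ center G) (hw : w ∈ center G) :
    ⁅a * z, b * w⁆ = ⁅a, b⁆ := by
  rw [commutatorElement_mul_left_eq_conj_mul,
    commutatorElement_eq_one_iff_commute.mpr (mem_center_iff.mp hz _).symm,
    commutatorElement_mul_right_eq_mul_conj,
    commutatorElement_eq_one_iff_commute.mpr (mem_center_iff.mp hw _)]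
  group

theorem finite_commutatorSet_of_finiteIndex_center [(center G).FiniteIndex] :
    (commutatorSet G).Finite := by
  have : Finite (G ⧸ center G) := finite_quotient_of_finiteIndex
  refine (Set.finite_range fun p : (G ⧸ center G) × (G ⧸ center G) ↦ ⁅p.1.out, p.2.out⁆).subset ?_
  rintro _ ⟨a, b, rfl⟩
  obtain ⟨z, hz⟩ := QuotientGroup.mk_out_eq_mul (center G) a
  obtain ⟨w, hw⟩ := QuotientGroup.mk_out_eq_mul (center G) b
  exact ⟨(a, b), by simp only [hz, hw, commutatorElement_mul_mem_center z.2 w.2]⟩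

variable (htf : ∀ g : G, g ≠ 1 → ¬IsOfFinOrder g)
include htf

theorem Subgroup.eq_bot_of_finite_of_torsionFree (K : Subgroup G) [Finite K] : K = ⊥ :=
  (eq_bot_iff_forall K).mpr fun x hx ↦ of_not_not fun hx1 ↦
    htf x hx1 (Submonoid.isOfFinOrder_coe.mpr (isOfFinOrder_of_finite (⟨x, hx⟩ : K)))

theorem isMulCommutative_of_torsionFree_of_finiteIndex_center [(center G).FiniteIndex] :
    IsMulCommutative G := by
  have : Finite (commutatorSet G) := finite_commutatorSet_of_finiteIndex_center.to_subtype
  exact (commutator_eq_bot_iff G).mp (eq_bot_of_finite_of_torsionFree htf _)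

theorem mem_center_of_torsionFree_of_zpowers_normal (n : G) [(zpowers n).Normal]
    [(zpowers n).FiniteIndex] : n ∈ center G := by
  obtain rfl | hn := eq_or_ne n 1
  · exact one_mem _
  refine mem_center_iff.mpr fun g ↦ ?_
  obtain ⟨e, he⟩ := mem_zpowers_iff.mp (Normal.conj_mem ‹_› n (mem_zpowers n) g)
  obtain ⟨j, hj⟩ := mem_zpowers_iff.mp ((zpowers n).pow_index_mem g)
  have hej : n ^ (e * j) = n ^ j := by
    rw [zpow_mul, he, conj_zpow, hj, (Commute.self_pow g _).eq, mul_inv_cancel_right]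
  obtain rfl | rfl := mul_left_eq_self₀.mp (injective_zpow_iff_not_isOfFinOrder.mpr (htf n hn) hej)
  · exact mul_inv_eq_iff_eq_mul.mp (by simpa using he.symm)
  · have hg : IsOfFinOrder g := isOfFinOrder_iff_pow_eq_one.mpr
      ⟨_, Nat.pos_of_ne_zero FiniteIndex.index_ne_zero, by simpa using hj.symm⟩
    obtain rfl : g = 1 := of_not_not fun hg1 ↦ htf g hg1 hg
    simp

open scoped IsMulCommutative in
theorem isCyclic_of_torsionFree_of_finiteIndex_isCyclic [IsMulCommutative G]
    (H : Subgroup G) [H.FiniteIndex] [IsCyclic H] : IsCyclic G :=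
  have : IsMulTorsionFree G := .of_not_isOfFinOrder htf
  isCyclic_of_injective ((powMonoidHom H.index).codRestrict H H.pow_index_mem)
    fun _ _ h ↦ pow_left_injective FiniteIndex.index_ne_zero (congrArg Subtype.val h)

end

/-- A torsion-free group containing a cyclic subgroup of finite index is cyclic. -/
theorem cyclic_of_torsionFree_finiteIndex_cyclic {G : Type*} [Group G]
    (htf : ∀ g : G, g ≠ 1 → ¬ IsOfFinOrder g)
    (H : Subgroup G) (hfi : H.FiniteIndex) (hc : IsCyclic H) :
    IsCyclic G := by
  obtain ⟨n, hn⟩ :=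
    H.normalCore.isCyclic_iff_exists_zpowers_eq_top.mp (isCyclic_of_le H.normalCore_le)
  have : (zpowers n).Normal := hn ▸ H.normalCore_normal
  have : (zpowers n).FiniteIndex := hn ▸ inferInstance
  have : (center G).FiniteIndex :=
    finiteIndex_of_le (zpowers_le.mpr (mem_center_of_torsionFree_of_zpowers_normal htf n))
  have : IsMulCommutative G := isMulCommutative_of_torsionFree_of_finiteIndex_center htf
  exact isCyclic_of_torsionFree_of_finiteIndex_isCyclic htf H
end

section
/- Let E be a group, let t be a central element of E, let Z be the (necessarily normal) subgroup of E generated by t, and let Q = E/Z. Assume that Q is torsion-free and that every abelian subgroup of Q is cyclic. Then for every non-abelian subgroup G of E, every finite-index subgroup of G is non-abelian. -/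
/-!
If `K` were abelian, the image `P` of `G` in `Q` would have a finite-index abelian subgroup. In a
torsion-free group a normal infinite cyclic subgroup is only acted on by `±1`, and a torsion-free
group whose centre has finite index is abelian (by the transfer into the centre). With abelian
subgroups cyclic, these two facts force `P` to be abelian, hence cyclic. But `G` is cyclic modulo
the central subgroup `G ∩ ⟨t⟩`, so `G` would be abelian.
-/

open Subgroup

/-- Unlike `IsMulTorsionFree`, which asks for unique roots, this only excludes nontrivial elements
of finite order; the two differ for non-commutative groups such as the Klein bottle group. -/
def Monoid.IsTorsionFree (G : Type*) [Monoid G] : Prop :=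
  ∀ g : G, g ≠ 1 → ¬IsOfFinOrder g

def AbelianSubgroupsCyclic (G : Type*) [Group G] : Prop :=
  ∀ A : Subgroup G, IsMulCommutative A → IsCyclic A

namespace Monoid.IsTorsionFree

variable {M N : Type*} [Monoid M] [Monoid N]

theorem eq_one_of_pow_eq_one (hM : IsTorsionFree M) {x : M} {n : ℕ} (hn : n ≠ 0)
    (hx : x ^ n = 1) : x = 1 :=
  by_contra fun h => hM x h (isOfFinOrder_iff_pow_eq_one.mpr ⟨n, Nat.pos_of_ne_zero hn, hx⟩)

theorem eq_one_of_zpow_eq_one {G : Type*} [Group G] (hG : IsTorsionFree G) {g : G} {n : ℤ}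
    (hn : n ≠ 0) (hg : g ^ n = 1) : g = 1 :=
  by_contra fun h => hG g h (isOfFinOrder_iff_zpow_eq_one.mpr ⟨n, hn, hg⟩)

theorem of_injective (hM : IsTorsionFree M) {f : N →* M} (hf : Function.Injective f) :
    IsTorsionFree N := fun x hx hfin =>
  hM (f x) (by rwa [ne_eq, ← map_one f, hf.eq_iff]) (hf.isOfFinOrder_iff.mpr hfin)

end Monoid.IsTorsionFree

section

variable {G H : Type*} [Group G] [Group H]

theorem AbelianSubgroupsCyclic.of_injective (hG : AbelianSubgroupsCyclic G) {f : H →* G}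
    (hf : Function.Injective f) : AbelianSubgroupsCyclic H := fun A _ =>
  (A.equivMapOfInjective f hf).isCyclic.mpr (hG _ inferInstance)

/-- The transfer `g ↦ g ^ [G : Z(G)]` embeds a torsion-free `G` into its centre. -/
theorem isMulCommutative_of_finiteIndex_center (hG : Monoid.IsTorsionFree G)
    [(center G).FiniteIndex] : IsMulCommutative G := by
  have hinj : Function.Injective (MonoidHom.transferCenterPow G) := by
    refine (injective_iff_map_eq_one _).mpr fun g hg => ?_
    have : g ^ (center G).index = 1 := by simpa using congrArg Subtype.val hg
    exact hG.eq_one_of_pow_eq_one FiniteIndex.index_ne_zero this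
  exact ⟨⟨fun x y => hinj <| by
    rw [map_mul, map_mul]
    exact Subtype.ext (mem_center_iff.mp (MonoidHom.transferCenterPow G y).2 _)⟩⟩

section NormalZPowers

variable {c : G} [(zpowers c).Normal]

theorem conj_eq_or_eq_inv_of_normal_zpowers (hG : Monoid.IsTorsionFree G) (s : G) :
    s * c * s⁻¹ = c ∨ s * c * s⁻¹ = c⁻¹ := by
  obtain ⟨a, ha⟩ := mem_zpowers_iff.mp (‹(zpowers c).Normal›.conj_mem c (mem_zpowers c) s)
  obtain ⟨b, hb⟩ := mem_zpowers_iff.mp (‹(zpowers c).Normal›.conj_mem c (mem_zpowers c) s⁻¹)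
  rw [inv_inv] at hb
  by_cases hc : c = 1
  · simp [hc]
  have hba : c ^ (b * a - 1) = 1 := by
    have : c = c ^ (b * a) := calc
      c = s⁻¹ * (s * c * s⁻¹) * s := by group
      _ = (s⁻¹ * c * s⁻¹⁻¹) ^ a := by rw [← ha, conj_zpow, inv_inv]
      _ = c ^ (b * a) := by rw [inv_inv, ← hb, zpow_mul]
    rw [zpow_sub, ← this, zpow_one, mul_inv_cancel]
  have : b * a = 1 := sub_eq_zero.mp <| by
    by_contra h
    exact hc (hG.eq_one_of_zpow_eq_one h hba)
  rcases Int.mul_eq_one_iff_eq_one_or_neg_one.mp this with ⟨-, rfl⟩ | ⟨-, rfl⟩ <;> simp [← ha]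

theorem commute_sq_of_normal_zpowers (hG : Monoid.IsTorsionFree G) (s : G) :
    Commute (s ^ 2) c := by
  have hconj : s ^ 2 * c * (s ^ 2)⁻¹ = c := by
    have h := conj_eq_or_eq_inv_of_normal_zpowers (c := c) hG s
    simp only [← MulAut.conj_apply] at h ⊢
    rw [pow_two, map_mul, MulAut.mul_apply]
    rcases h with h | h <;> simp only [h, map_inv, inv_inv]
  exact mul_inv_eq_iff_eq_mul.mp hconj

theorem commute_of_normal_zpowers_of_sq_mem (hG : Monoid.IsTorsionFree G) {s : G}
    (hs : s ^ 2 ∈ zpowers c) : Commute s c := by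
  rcases conj_eq_or_eq_inv_of_normal_zpowers (c := c) hG s with h | h
  · exact mul_inv_eq_iff_eq_mul.mp h
  obtain ⟨k, hk⟩ := mem_zpowers_iff.mp hs
  have hck : c ^ k * c ^ k = 1 := calc
    c ^ k * c ^ k = c ^ k * (s * c ^ k * s⁻¹) := by rw [hk]; group
    _ = 1 := by rw [← conj_zpow, h, inv_zpow, mul_inv_cancel]
  rw [hk, ← pow_two, ← pow_mul] at hck
  rw [hG.eq_one_of_pow_eq_one (by norm_num) hck]
  exact Commute.one_left c

end NormalZPowers

/- The normal core of `M` is some `⟨q⟩`; its centraliser `C` has finite-index centre, so `C` is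
abelian and `C = ⟨c⟩` is normal. Every `s ^ 2` centralises `q`, so lies in `⟨c⟩`, so `s` centralises
`c`, and `⟨c⟩` is a central subgroup of finite index. -/
theorem isMulCommutative_of_finiteIndex (htf : Monoid.IsTorsionFree G)
    (hcyc : AbelianSubgroupsCyclic G) (M : Subgroup G) [M.FiniteIndex] [IsMulCommutative M] :
    IsMulCommutative G := by
  have : IsMulCommutative M.normalCore := le_centralizer_iff_isMulCommutative.mp <|
    M.normalCore_le.trans ((le_centralizer M).trans (centralizer_le M.normalCore_le))
  obtain ⟨q, hq⟩ := M.normalCore.isCyclic_iff_exists_zpowers_eq_top.mp (hcyc _ this)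
  have : (zpowers q).FiniteIndex := hq ▸ inferInstance
  have : (zpowers q).Normal := hq ▸ M.normalCore_normal
  set C := centralizer (zpowers q : Set G)
  have : C.FiniteIndex := finiteIndex_of_le (le_centralizer _)
  have : (center C).FiniteIndex := finiteIndex_of_le (H := (zpowers q).subgroupOf C)
    fun x hx => mem_center_iff.mpr fun y => Subtype.ext (y.2 x hx).symm
  have : IsMulCommutative C :=
    isMulCommutative_of_finiteIndex_center (htf.of_injective C.subtype_injective)
  obtain ⟨c, hc⟩ := C.isCyclic_iff_exists_zpowers_eq_top.mp (hcyc C this)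
  have : (zpowers c).Normal := hc ▸ normal_centralizer
  have : (zpowers c).FiniteIndex := hc ▸ inferInstance
  have hsq (s : G) : s ^ 2 ∈ zpowers c := hc ▸ mem_centralizer_iff.mpr fun x hx => by
    obtain ⟨k, rfl⟩ := mem_zpowers_iff.mp hx
    exact ((commute_sq_of_normal_zpowers htf s).zpow_right k).eq.symm
  have : (center G).FiniteIndex := finiteIndex_of_le (H := zpowers c) <| zpowers_le.mpr <|
    mem_center_iff.mpr fun s => (commute_of_normal_zpowers_of_sq_mem htf (hsq s)).eq
  exact isMulCommutative_of_finiteIndex_center htf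

end

/-- Group-theoretic core of Lemma 3.3(i): let `E` be a group, `t` a central element,
`Z = ⟨t⟩` (normal since `t` is central) and `Q = E / Z`. If `Q` is torsion-free and
every abelian subgroup of `Q` is cyclic, then every finite-index subgroup of a
non-abelian subgroup of `E` is non-abelian. -/
theorem finiteIndex_subgroup_nonabelian {E : Type*} [Group E]
    (t : E) (ht : t ∈ Subgroup.center E)
    (hZ : (Subgroup.zpowers t).Normal)
    (hQtf : ∀ q : E ⧸ Subgroup.zpowers t, q ≠ 1 → ¬ IsOfFinOrder q)
    (hQab : ∀ A : Subgroup (E ⧸ Subgroup.zpowers t),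
      (∀ x y : A, x * y = y * x) → IsCyclic A)
    (G : Subgroup E) (hG : ¬ ∀ x y : G, x * y = y * x)
    (K : Subgroup G) (hK : K.FiniteIndex) :
    ¬ ∀ x y : K, x * y = y * x := by
  simp only [← isMulCommutative_iff] at hQab hG ⊢
  intro hKab
  set φ := (QuotientGroup.mk' (zpowers t)).comp G.subtype
  set f := φ.rangeRestrict
  have : (K.map f).FiniteIndex := ⟨ne_zero_of_dvd_ne_zero hK.index_ne_zero
    (index_map_dvd K (MonoidHom.rangeRestrict_surjective _))⟩
  have : IsCyclic φ.range := hQab _ <| isMulCommutative_of_finiteIndex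
    (Monoid.IsTorsionFree.of_injective hQtf (subtype_injective _))
    (AbelianSubgroupsCyclic.of_injective hQab (subtype_injective _)) (K.map f)
  refine hG (f.isMulCommutative_of_isCyclic_of_ker_le_center fun x hx => ?_)
  have hx : (x : E) ∈ zpowers t := by
    rwa [MonoidHom.ker_rangeRestrict, MonoidHom.mem_ker, MonoidHom.comp_apply,
      QuotientGroup.mk'_apply, QuotientGroup.eq_one_iff] at hx
  exact mem_center_iff.mpr fun g => Subtype.ext <| mem_center_iff.mp (zpowers_le.mpr ht hx) g
end

section
/- Let Γ be a subgroup of SL(2,ℝ) that is discrete and torsion-free, and let a and b be non-identity elements of Γ for which there exist non-zero integers n and m with aⁿ = bᵐ. Then the subgroup of SL(2,ℝ) generated by a and b is cyclic (and infinite). -/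
/-! A `2 × 2` matrix `A` commutes with `C` exactly when the vectors `(A₀₁, A₁₀, A₀₀ - A₁₁)` and
`(C₀₁, C₁₀, C₀₀ - C₁₁)` are parallel, so the centralizer of a non-scalar matrix is commutative.
The central elements `±1` of `SL(2,ℝ)` have finite order, so in a torsion-free subgroup `aⁿ ≠ 1`
is not central; as `a` and `b` both commute with `aⁿ = bᵐ`, they commute with each other.
Writing `d = gcd(n, m) = un + vm`, the element `g = aᵛbᵘ` satisfies `gᵐ = aᵈ` and `gⁿ = bᵈ`.
Commuting elements of a torsion-free group with equal `d`-th powers are equal, so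
`a = g^(m/d)` and `b = g^(n/d)`: the group generated by `a` and `b` is `⟨g⟩`. -/

instance : TopologicalSpace (Matrix.SpecialLinearGroup (Fin 2) ℝ) :=
  TopologicalSpace.induced (fun g => (g : Matrix (Fin 2) (Fin 2) ℝ)) inferInstance

open Subgroup

namespace Matrix

theorem commute_iff_fin_two {R : Type*} [CommRing R] {A B : Matrix (Fin 2) (Fin 2) R} :
    Commute A B ↔ A 0 1 * B 1 0 = B 0 1 * A 1 0 ∧
      A 0 1 * (B 0 0 - B 1 1) = B 0 1 * (A 0 0 - A 1 1) ∧
      A 1 0 * (B 0 0 - B 1 1) = B 1 0 * (A 0 0 - A 1 1) := by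
  rw [Commute, SemiconjBy, ← Matrix.ext_iff]
  simp only [Fin.forall_fin_two, mul_apply, Fin.sum_univ_two]
  constructor
  · rintro ⟨⟨h00, h01⟩, h10, -⟩
    exact ⟨by linear_combination h00, by linear_combination -h01, by linear_combination h10⟩
  · rintro ⟨h1, h2, h3⟩
    exact ⟨⟨by linear_combination h1, by linear_combination -h2⟩,
      by linear_combination h3, by linear_combination -h1⟩

theorem commute_of_commute_of_notMem_range_scalar {K : Type*} [Field K]
    {A B C : Matrix (Fin 2) (Fin 2) K} (hC : C ∉ Set.range (scalar (Fin 2)))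
    (hA : Commute A C) (hB : Commute B C) : Commute A B := by
  have hC' : C 0 1 ≠ 0 ∨ C 1 0 ≠ 0 ∨ C 0 0 ≠ C 1 1 := by
    contrapose! hC
    refine ⟨C 1 1, ?_⟩
    ext i j
    fin_cases i <;> fin_cases j <;> simp [hC]
  rw [commute_iff_fin_two] at hA hB ⊢
  rcases hC' with h | h | h <;> grind

end Matrix

namespace Matrix.SpecialLinearGroup

theorem pow_card_eq_one_of_mem_center {n R : Type*} [Fintype n] [DecidableEq n] [CommRing R]
    {c : SpecialLinearGroup n R} (hc : c ∈ center (SpecialLinearGroup n R)) :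
    c ^ Fintype.card n = 1 := by
  obtain ⟨r, hr, hrc⟩ := mem_center_iff.1 hc
  ext : 1
  rw [coe_pow, ← hrc, ← map_pow, hr, map_one, coe_one]

theorem commute_of_commute_of_notMem_center {K : Type*} [Field K]
    {a b c : SpecialLinearGroup (Fin 2) K} (hc : c ∉ center (SpecialLinearGroup (Fin 2) K))
    (ha : Commute a c) (hb : Commute b c) : Commute a b := by
  have hc' : (c : Matrix (Fin 2) (Fin 2) K) ∉ Set.range (scalar (Fin 2)) := by
    rintro ⟨r, hr⟩
    refine hc (mem_center_iff.2 ⟨r, ?_, hr⟩)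
    simpa [← hr] using c.prop
  exact Subtype.ext (Matrix.commute_of_commute_of_notMem_range_scalar hc'
    (ha.map coeMonoidHom) (hb.map coeMonoidHom)).eq

end Matrix.SpecialLinearGroup

section TorsionFreeSubgroup

variable {G : Type*} [Group G] {Γ : Subgroup G} (htf : ∀ g : Γ, g ≠ 1 → ¬IsOfFinOrder g)
include htf

theorem not_isOfFinOrder_of_mem {x : G} (hx : x ∈ Γ) (hx1 : x ≠ 1) : ¬IsOfFinOrder x :=
  fun h ↦ htf ⟨x, hx⟩ (by simpa [Subtype.ext_iff] using hx1)
    (Γ.subtype_injective.isOfFinOrder_iff.1 h)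

theorem eq_one_of_zpow_eq_one_of_mem {x : G} (hx : x ∈ Γ) {k : ℤ} (hk : k ≠ 0)
    (h : x ^ k = 1) : x = 1 :=
  not_not.1 fun hx1 ↦
    not_isOfFinOrder_of_mem htf hx hx1 (isOfFinOrder_iff_zpow_eq_one.2 ⟨k, hk, h⟩)

theorem Commute.eq_of_zpow_eq_zpow_of_mem {x y : G} (hxy : Commute x y) (hx : x ∈ Γ) (hy : y ∈ Γ)
    {k : ℤ} (hk : k ≠ 0) (h : x ^ k = y ^ k) : x = y := by
  refine mul_inv_eq_one.1
    (eq_one_of_zpow_eq_one_of_mem htf (Γ.mul_mem hx (Γ.inv_mem hy)) hk ?_)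
  rw [hxy.inv_right.mul_zpow, h, inv_zpow, mul_inv_cancel]

theorem exists_closure_pair_eq_zpowers {a b : G} (hab : Commute a b) (ha : a ∈ Γ) (hb : b ∈ Γ)
    {n m : ℤ} (hn : n ≠ 0) (hnm : a ^ n = b ^ m) :
    ∃ g, closure {a, b} = zpowers g := by
  set d : ℤ := (Int.gcd n m : ℤ)
  have hd : d ≠ 0 := by simp [d, hn]
  obtain ⟨n', hn'⟩ : d ∣ n := Int.gcd_dvd_left n m
  obtain ⟨m', hm'⟩ : d ∣ m := Int.gcd_dvd_right n m
  have hbez : d = n * n.gcdA m + m * n.gcdB m := Int.gcd_eq_gcd_ab n m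
  set g := a ^ n.gcdB m * b ^ n.gcdA m
  have hgΓ : g ∈ Γ := Γ.mul_mem (Γ.zpow_mem ha _) (Γ.zpow_mem hb _)
  have hg_zpow (k : ℤ) : g ^ k = a ^ (n.gcdB m * k) * b ^ (n.gcdA m * k) := by
    rw [(hab.zpow_zpow _ _).mul_zpow, zpow_mul, zpow_mul]
  have hga : g ^ m' = a := by
    have hgA : Commute g a := ((Commute.refl a).zpow_left _).mul_left (hab.symm.zpow_left _)
    refine (hgA.zpow_left m').eq_of_zpow_eq_zpow_of_mem htf (Γ.zpow_mem hgΓ _) ha hd ?_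
    calc (g ^ m') ^ d = g ^ m := by rw [← zpow_mul, hm', mul_comm]
      _ = a ^ (n.gcdB m * m) * (a ^ n) ^ n.gcdA m := by
        rw [hg_zpow, hnm, mul_comm (n.gcdA m), zpow_mul b]
      _ = a ^ d := by rw [← zpow_mul, ← zpow_add, hbez]; congr 1; ring
  have hgb : g ^ n' = b := by
    have hgB : Commute g b := (hab.zpow_left _).mul_left ((Commute.refl b).zpow_left _)
    refine (hgB.zpow_left n').eq_of_zpow_eq_zpow_of_mem htf (Γ.zpow_mem hgΓ _) hb hd ?_
    calc (g ^ n') ^ d = g ^ n := by rw [← zpow_mul, hn', mul_comm]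
      _ = (b ^ m) ^ n.gcdB m * b ^ (n.gcdA m * n) := by
        rw [hg_zpow, ← hnm, mul_comm (n.gcdB m), zpow_mul a]
      _ = b ^ d := by rw [← zpow_mul, ← zpow_add, hbez]; congr 1; ring
  refine ⟨g, le_antisymm ?_ ?_⟩
  · rw [closure_le, Set.insert_subset_iff, Set.singleton_subset_iff]
    exact ⟨⟨m', hga⟩, ⟨n', hgb⟩⟩
  · rw [zpowers_le]
    exact mul_mem (zpow_mem (subset_closure (by simp)) _) (zpow_mem (subset_closure (by simp)) _)

end TorsionFreeSubgroup

theorem Subgroup.infinite_of_mem_of_not_isOfFinOrder {G : Type*} [Group G] {H : Subgroup G}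
    {x : G} (hxH : x ∈ H) (hx : ¬IsOfFinOrder x) : Infinite H :=
  Set.infinite_coe_iff.2 ((infinite_zpowers.2 hx).mono (zpowers_le.2 hxH))

theorem common_power_generate_cyclic_general
    (Γ : Subgroup (Matrix.SpecialLinearGroup (Fin 2) ℝ))
    (htf : ∀ g : Γ, g ≠ 1 → ¬ IsOfFinOrder g)
    (a b : Matrix.SpecialLinearGroup (Fin 2) ℝ)
    (ha : a ∈ Γ) (hb : b ∈ Γ) (ha1 : a ≠ 1)
    (hpow : ∃ n m : ℤ, n ≠ 0 ∧ m ≠ 0 ∧ a ^ n = b ^ m) :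
    IsCyclic (Subgroup.closure ({a, b} : Set (Matrix.SpecialLinearGroup (Fin 2) ℝ))) ∧
      Infinite (Subgroup.closure ({a, b} : Set (Matrix.SpecialLinearGroup (Fin 2) ℝ))) := by
  obtain ⟨n, m, hn, -, hnm⟩ := hpow
  have han : a ^ n ≠ 1 := fun h ↦ ha1 (eq_one_of_zpow_eq_one_of_mem htf ha hn h)
  have han_center : a ^ n ∉ center _ := fun h ↦
    not_isOfFinOrder_of_mem htf (Γ.zpow_mem ha n) han
      (isOfFinOrder_iff_pow_eq_one.2
        ⟨_, Fintype.card_pos, Matrix.SpecialLinearGroup.pow_card_eq_one_of_mem_center h⟩)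
  have hab : Commute a b :=
    Matrix.SpecialLinearGroup.commute_of_commute_of_notMem_center han_center
      ((Commute.refl a).zpow_right n) (hnm ▸ (Commute.refl b).zpow_right m)
  obtain ⟨g, hg⟩ := exists_closure_pair_eq_zpowers htf hab ha hb hn hnm
  exact ⟨hg ▸ inferInstance,
    infinite_of_mem_of_not_isOfFinOrder (subset_closure (by simp))
      (not_isOfFinOrder_of_mem htf ha ha1)⟩

/-- If two non-trivial elements of a discrete torsion-free subgroup of `SL(2,ℝ)` have a
common non-trivial power, then they generate an infinite cyclic group. -/
theorem common_power_generate_cyclic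
    (Γ : Subgroup (Matrix.SpecialLinearGroup (Fin 2) ℝ))
    (hdisc : DiscreteTopology Γ)
    (htf : ∀ g : Γ, g ≠ 1 → ¬ IsOfFinOrder g)
    (a b : Matrix.SpecialLinearGroup (Fin 2) ℝ)
    (ha : a ∈ Γ) (hb : b ∈ Γ) (ha1 : a ≠ 1) (hb1 : b ≠ 1)
    (hpow : ∃ n m : ℤ, n ≠ 0 ∧ m ≠ 0 ∧ a ^ n = b ^ m) :
    IsCyclic (Subgroup.closure ({a, b} : Set (Matrix.SpecialLinearGroup (Fin 2) ℝ))) ∧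
      Infinite (Subgroup.closure ({a, b} : Set (Matrix.SpecialLinearGroup (Fin 2) ℝ))) :=
  common_power_generate_cyclic_general Γ htf a b ha hb ha1 hpow
end
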